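/- arXiv:2408.05561 — 3 statements merged into one kernel-verified Lean document; each statement's English description precedes it below -/
import Mathlib

section
/- Let K be a field, R = K[x_1,…,x_n], I ⊆ R a square-free monomial ideal, 𝔭 ⊆ R a prime monomial ideal, and let {u_1,…,u_{β_1(I)}} be a maximal independent set of minimal monomial generators of I (so its cardinality is β_1(I)). Suppose that for some positive integer s, 𝔭\x_i ∉ Ass(R/(I\x_i)^s) for every variable x_i dividing the product ∏_{i=1}^{β_1(I)} u_i. If 𝔭 ∈ Ass(R/I^s), then s ≥ β_1(I) + 1. -/
open MvPolynomial

/-- Deletion of the variable `x i` from a monomial ideal: set `x i = 0` in every generator. -/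
noncomputable def deleteVar {K : Type*} [Field K] {n : ℕ} (i : Fin n)
    (I : Ideal (MvPolynomial (Fin n) K)) : Ideal (MvPolynomial (Fin n) K) :=
  I.map (aeval fun j => if j = i then (0 : MvPolynomial (Fin n) K) else X j).toRingHom

/-- The square-free monomial `∏_{i ∈ T} x_i` is a minimal monomial generator of the
square-free monomial ideal `I`: it lies in `I` and no proper divisor does. -/
def IsMinGen {K : Type*} [Field K] {n : ℕ} (I : Ideal (MvPolynomial (Fin n) K))
    (T : Finset (Fin n)) : Prop :=
  (∏ i ∈ T, (X i : MvPolynomial (Fin n) K)) ∈ I ∧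
    ∀ T' ⊂ T, (∏ i ∈ T', (X i : MvPolynomial (Fin n) K)) ∉ I

/-!
Suppose `s ≤ b`. Both `I ^ s` and `𝔭` are monomial ideals, so if `𝔭 = I ^ s : f`, prime
avoidance over the terms of `f` gives `𝔭 = I ^ s : x^u` for a single monomial `x^u`. If a variable
`x_i` of some `u_j` did not divide `x^u`, setting `x_i = 0` would commute with this colon, giving
`𝔭 \ x_i = (I \ x_i) ^ s : x^u` and making `𝔭 \ x_i` an associated prime of `(I \ x_i) ^ s`.
So every variable of `u_1, …, u_s` divides `x^u`; these generators have pairwise disjoint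
supports, hence `u_1 ⋯ u_s ∈ I ^ s` divides `x^u`, and `x^u ∈ I ^ s` forces `𝔭 = R`.
-/

open scoped Pointwise

theorem mem_associatedPrimes_quotient_iff {R : Type*} [CommRing R] [IsNoetherianRing R]
    {J p : Ideal R} :
    p ∈ associatedPrimes R (R ⧸ J) ↔ p.IsPrime ∧ ∃ f : R, ∀ r, r ∈ p ↔ r * f ∈ J := by
  rw [AssociatedPrimes.mem_iff, isAssociatedPrime_iff, Ideal.Quotient.mk_surjective.exists]
  refine and_congr_right fun _ => exists_congr fun f => SetLike.ext_iff.trans ?_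
  refine forall_congr' fun r => ?_
  rw [Submodule.mem_colon_singleton, Submodule.mem_bot, Algebra.smul_def,
    Ideal.Quotient.algebraMap_eq, ← map_mul, Ideal.Quotient.eq_zero_iff_mem]

theorem Finsupp.le_erase_iff {σ : Type*} {d v : σ →₀ ℕ} {i : σ} :
    d ≤ v.erase i ↔ d i = 0 ∧ d ≤ v := by
  classical
  constructor
  · intro h
    refine ⟨Nat.eq_zero_of_le_zero (by simpa using h i), fun k => (h k).trans ?_⟩
    rw [Finsupp.erase_apply]
    split_ifs <;> simp
  · rintro ⟨hdi, hdv⟩ k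
    rw [Finsupp.erase_apply]
    split_ifs with hk
    · rw [hk, hdi]
    · exact hdv k

namespace MvPolynomial

section CommSemiring

variable {σ R : Type*} [CommSemiring R]

variable (R) in
noncomputable def monomialIdeal (D : Set (σ →₀ ℕ)) : Ideal (MvPolynomial σ R) :=
  Ideal.span ((fun d => monomial d 1) '' D)

theorem monomialIdeal_mul (D E : Set (σ →₀ ℕ)) :
    monomialIdeal R D * monomialIdeal R E = monomialIdeal R (D + E) := by
  rw [monomialIdeal, monomialIdeal, monomialIdeal, Ideal.span_mul_span', ← Set.image2_mul,
    ← Set.image2_add, Set.image_image2, Set.image2_image_left, Set.image2_image_right]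
  simp only [monomial_mul, mul_one]

theorem monomialIdeal_pow (D : Set (σ →₀ ℕ)) (s : ℕ) :
    monomialIdeal R D ^ s = monomialIdeal R (s • D) := by
  induction s with
  | zero =>
    rw [pow_zero, zero_nsmul, Ideal.one_eq_top, eq_comm, Ideal.eq_top_iff_one]
    exact Ideal.subset_span ⟨0, rfl, rfl⟩
  | succ s ih => rw [pow_succ, ih, monomialIdeal_mul, succ_nsmul]

theorem span_X_image_eq_monomialIdeal (A : Set σ) :
    Ideal.span (X '' A) = monomialIdeal R ((fun k => Finsupp.single k 1) '' A) := by
  rw [monomialIdeal, Set.image_image]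
  rfl

theorem span_prod_X_image_eq_monomialIdeal (S : Set (Finset σ)) :
    Ideal.span ((fun T => ∏ k ∈ T, (X k : MvPolynomial σ R)) '' S) =
      monomialIdeal R ((fun T => ∑ k ∈ T, Finsupp.single k 1) '' S) := by
  rw [monomialIdeal, Set.image_image]
  simp only [monomial_sum_one]
  rfl

theorem aeval_ite_eq_zero_monomial [DecidableEq σ] (i : σ) (d : σ →₀ ℕ) :
    aeval (fun j => if j = i then (0 : MvPolynomial σ R) else X j) (monomial d (1 : R)) =
      if d i = 0 then monomial d 1 else 0 := by
  rw [aeval_monomial, map_one, one_mul]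
  split_ifs with hdi
  · rw [monomial_eq, C_1, one_mul]
    refine Finsupp.prod_congr fun k hk => ?_
    rw [if_neg (by rintro rfl; exact Finsupp.mem_support_iff.1 hk hdi)]
  · exact Finset.prod_eq_zero (Finsupp.mem_support_iff.2 hdi) (by simp [zero_pow hdi])

theorem prod_X_dvd_monomial {T : Finset σ} {u : σ →₀ ℕ} (hu : ∀ k ∈ T, u k ≠ 0) :
    ∏ k ∈ T, X k ∣ monomial u (1 : R) := by
  rw [monomial_eq, C_1, one_mul, Finsupp.prod]
  calc ∏ k ∈ T, X k ∣ ∏ k ∈ T, (X k : MvPolynomial σ R) ^ u k :=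
        Finset.prod_dvd_prod_of_dvd _ _ fun k hk => dvd_pow_self _ (hu k hk)
    _ ∣ ∏ k ∈ u.support, X k ^ u k :=
        Finset.prod_dvd_prod_of_subset _ _ _ fun k hk => Finsupp.mem_support_iff.2 (hu k hk)

theorem monomial_mem_pow_of_pairwise_disjoint {ι : Type*} [Fintype ι]
    {I : Ideal (MvPolynomial σ R)} {T : ι → Finset σ}
    (hT : Pairwise fun j j' => Disjoint (T j) (T j'))
    (hTI : ∀ j, ∏ k ∈ T j, X k ∈ I) {u : σ →₀ ℕ} (hu : ∀ j, ∀ k ∈ T j, u k ≠ 0) :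
    monomial u 1 ∈ I ^ Fintype.card ι := by
  classical
  have hprod : ∏ j, ∏ k ∈ T j, X k ∈ I ^ Fintype.card ι := by
    rw [← Finset.card_univ, ← Finset.prod_const]
    exact Ideal.prod_mem_prod fun j _ => hTI j
  refine Ideal.mem_of_dvd _ ?_ hprod
  rw [← Finset.prod_biUnion fun j _ j' _ h => hT h]
  refine prod_X_dvd_monomial fun k hk => ?_
  obtain ⟨j, -, hkj⟩ := Finset.mem_biUnion.1 hk
  exact hu j k hkj

variable [Nontrivial R]

theorem monomial_mem_monomialIdeal_iff {D : Set (σ →₀ ℕ)} {v : σ →₀ ℕ} :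
    monomial v 1 ∈ monomialIdeal R D ↔ ∃ d ∈ D, d ≤ v := by
  classical
  rw [monomialIdeal, mem_ideal_span_monomial_image, support_monomial, if_neg one_ne_zero]
  simp

theorem mem_monomialIdeal_iff {D : Set (σ →₀ ℕ)} {f : MvPolynomial σ R} :
    f ∈ monomialIdeal R D ↔ ∀ w ∈ f.support, monomial w 1 ∈ monomialIdeal R D := by
  simp_rw [monomial_mem_monomialIdeal_iff]
  exact mem_ideal_span_monomial_image

theorem mul_monomial_mem_monomialIdeal_iff {D : Set (σ →₀ ℕ)} {f : MvPolynomial σ R}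
    {u : σ →₀ ℕ} :
    f * monomial u 1 ∈ monomialIdeal R D ↔
      ∀ w ∈ f.support, monomial (w + u) 1 ∈ monomialIdeal R D := by
  have hsupp : (f * monomial u 1).support = f.support.map (addRightEmbedding u) :=
    AddMonoidAlgebra.support_coeff_mul_single f _ (by simp) _
  rw [mem_monomialIdeal_iff, hsupp]
  simp

theorem mem_monomialIdeal_iff_mul_monomial_mem {E D : Set (σ →₀ ℕ)} {u : σ →₀ ℕ}
    (h : ∀ w, monomial w 1 ∈ monomialIdeal R E ↔ monomial (w + u) 1 ∈ monomialIdeal R D)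
    (r : MvPolynomial σ R) :
    r ∈ monomialIdeal R E ↔ r * monomial u 1 ∈ monomialIdeal R D := by
  rw [mem_monomialIdeal_iff, mul_monomial_mem_monomialIdeal_iff]
  exact forall₂_congr fun w _ => h w

theorem monomial_mem_monomialIdeal_filter_iff {D : Set (σ →₀ ℕ)} {v : σ →₀ ℕ} (i : σ) :
    monomial v 1 ∈ monomialIdeal R {d ∈ D | d i = 0} ↔
      monomial (v.erase i) 1 ∈ monomialIdeal R D := by
  simp only [monomial_mem_monomialIdeal_iff, Set.mem_ofPred_eq, and_assoc, Finsupp.le_erase_iff]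

theorem exists_monomial_colon_eq {E D : Set (σ →₀ ℕ)} (hE : (monomialIdeal R E).IsPrime)
    {f : MvPolynomial σ R} (hf : ∀ r, r ∈ monomialIdeal R E ↔ r * f ∈ monomialIdeal R D) :
    ∃ u, ∀ r, r ∈ monomialIdeal R E ↔ r * monomial u 1 ∈ monomialIdeal R D := by
  -- Each `J : x^u` with `u` in the support of `f` contains the monomial prime, and their
  -- intersection lies in `J : f`, which is that prime; so by primality one of them equals it.
  set J := monomialIdeal R D
  let Q : (σ →₀ ℕ) → Ideal (MvPolynomial σ R) := fun u => J.colon {monomial u 1}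
  have hQ : ∀ u r, r ∈ Q u ↔ r * monomial u 1 ∈ J := fun u r => Submodule.mem_colon_singleton
  have hEQ : ∀ u ∈ f.support, monomialIdeal R E ≤ Q u := by
    intro u hu
    refine Ideal.span_le.2 ?_
    rintro - ⟨e, he, rfl⟩
    have hef := (hf _).1 (Ideal.subset_span ⟨e, he, rfl⟩)
    rw [mul_comm, mul_monomial_mem_monomialIdeal_iff] at hef
    rw [SetLike.mem_coe, hQ, monomial_mul, one_mul, add_comm]
    exact hef u hu
  obtain ⟨u, hu, hQE⟩ : ∃ u ∈ f.support, Q u ≤ monomialIdeal R E := by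
    refine hE.inf_le'.1 fun r hr => (hf r).2 ?_
    rw [f.as_sum, Finset.mul_sum]
    refine Ideal.sum_mem _ fun w hw => ?_
    rw [← mul_one (coeff w f), ← C_mul_monomial, mul_left_comm]
    exact J.mul_mem_left _ ((hQ w r).1 (Submodule.mem_finsetInf.1 hr w hw))
  exact ⟨u, fun r => ⟨fun h => (hQ u r).1 (hEQ u hu h), fun h => hQE ((hQ u r).2 h)⟩⟩

end CommSemiring

section CommRing

variable {σ R : Type*} [CommRing R]

theorem sub_aeval_ite_mem_span_X_image (B : Set σ) [DecidablePred (· ∈ B)]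
    (f : MvPolynomial σ R) :
    f - aeval (fun j => if j ∈ B then (0 : MvPolynomial σ R) else X j) f ∈
      Ideal.span (X '' B) := by
  induction f using MvPolynomial.induction_on with
  | C a => rw [aeval_C, algebraMap_eq, sub_self]; exact Ideal.zero_mem _
  | add f g hf hg =>
    rw [map_add, add_sub_add_comm]
    exact Ideal.add_mem _ hf hg
  | mul_X f j hf =>
    set φ : MvPolynomial σ R →ₐ[R] MvPolynomial σ R := aeval fun j => if j ∈ B then 0 else X j
    rw [map_mul, aeval_X,
      show f * X j - φ f * (if j ∈ B then 0 else X j) =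
        (f - φ f) * X j + φ f * (X j - if j ∈ B then 0 else X j) by ring]
    refine Ideal.add_mem _ (Ideal.mul_mem_right _ _ hf) (Ideal.mul_mem_left _ _ ?_)
    split_ifs with hj
    · rw [sub_zero]
      exact Ideal.subset_span ⟨j, hj, rfl⟩
    · rw [sub_self]
      exact Ideal.zero_mem _

theorem isPrime_span_X_image [IsDomain R] (B : Set σ) :
    (Ideal.span (X '' B) : Ideal (MvPolynomial σ R)).IsPrime := by
  classical
  let φ : MvPolynomial σ R →ₐ[R] MvPolynomial σ R := aeval fun j => if j ∈ B then 0 else X j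
  suffices Ideal.span (X '' B) = RingHom.ker φ from this ▸ RingHom.ker_isPrime _
  refine le_antisymm (Ideal.span_le.2 ?_) fun f hf => ?_
  · rintro - ⟨j, hj, rfl⟩
    simp [φ, hj]
  · have hφf : φ f = 0 := hf
    have hsub := sub_aeval_ite_mem_span_X_image B f
    rwa [hφf, sub_zero] at hsub

end CommRing

end MvPolynomial

section Deletion

variable {K : Type*} [Field K] {n : ℕ}

theorem deleteVar_pow (i : Fin n) (I : Ideal (MvPolynomial (Fin n) K)) (s : ℕ) :
    deleteVar i I ^ s = deleteVar i (I ^ s) :=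
  (Ideal.map_pow _ _ _).symm

theorem deleteVar_monomialIdeal (i : Fin n) (D : Set (Fin n →₀ ℕ)) :
    deleteVar i (monomialIdeal K D) = monomialIdeal K {d ∈ D | d i = 0} := by
  rw [deleteVar, monomialIdeal, Ideal.map_span, Set.image_image]
  refine le_antisymm (Ideal.span_le.2 ?_) (Ideal.span_le.2 ?_)
  · rintro - ⟨d, hd, rfl⟩
    dsimp only [AlgHom.toRingHom_eq_coe, RingHom.coe_coe]
    rw [SetLike.mem_coe, aeval_ite_eq_zero_monomial]
    split_ifs with hdi
    · exact Ideal.subset_span ⟨d, ⟨hd, hdi⟩, rfl⟩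
    · exact Ideal.zero_mem _
  · rintro - ⟨d, ⟨hd, hdi⟩, rfl⟩
    refine Ideal.subset_span ⟨d, hd, ?_⟩
    dsimp only [AlgHom.toRingHom_eq_coe, RingHom.coe_coe]
    rw [aeval_ite_eq_zero_monomial, if_pos hdi]

theorem deleteVar_span_X_image (i : Fin n) (A : Set (Fin n)) :
    deleteVar i (Ideal.span (X '' A) : Ideal (MvPolynomial (Fin n) K)) =
      Ideal.span (X '' (A \ {i})) := by
  rw [span_X_image_eq_monomialIdeal, span_X_image_eq_monomialIdeal, deleteVar_monomialIdeal]
  congr 1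
  ext d
  constructor
  · rintro ⟨⟨k, hk, rfl⟩, hki⟩
    exact ⟨k, ⟨hk, fun h => by simp [Set.mem_singleton_iff.1 h] at hki⟩, rfl⟩
  · rintro ⟨k, ⟨hk, hki⟩, rfl⟩
    exact ⟨⟨k, hk, rfl⟩, Finsupp.single_eq_of_ne (Ne.symm hki)⟩

theorem deleteVar_colon_monomial {E D : Set (Fin n →₀ ℕ)} {i : Fin n} {u : Fin n →₀ ℕ}
    (hui : u i = 0)
    (h : ∀ r, r ∈ monomialIdeal K E ↔ r * monomial u 1 ∈ monomialIdeal K D)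
    (r : MvPolynomial (Fin n) K) :
    r ∈ deleteVar i (monomialIdeal K E) ↔
      r * monomial u 1 ∈ deleteVar i (monomialIdeal K D) := by
  rw [deleteVar_monomialIdeal, deleteVar_monomialIdeal]
  refine mem_monomialIdeal_iff_mul_monomial_mem (fun w => ?_) r
  rw [monomial_mem_monomialIdeal_filter_iff, monomial_mem_monomialIdeal_filter_iff, h,
    monomial_mul, mul_one, Finsupp.erase_add,
    Finsupp.erase_of_notMem_support (Finsupp.notMem_support_iff.2 hui)]

end Deletion

theorem stmt_2_general {K : Type*} [Field K] {n : ℕ}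
    (I : Ideal (MvPolynomial (Fin n) K))
    (hI : ∃ S : Set (Finset (Fin n)),
      I = Ideal.span ((fun T => ∏ i ∈ T, (X i : MvPolynomial (Fin n) K)) '' S))
    (A : Set (Fin n)) (p : Ideal (MvPolynomial (Fin n) K))
    (hpA : p = Ideal.span (X '' A))
    -- `{u_1, …, u_b}` is an independent set of minimal generators (`b = β₁(I)`):
    (b : ℕ) (U : Fin b → Finset (Fin n))
    (hUgen : ∀ j : Fin b, IsMinGen I (U j))
    (hUindep : ∀ j k : Fin b, j ≠ k → Disjoint (U j) (U k))
    (s : ℕ)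
    (hdel : ∀ j : Fin b, ∀ i ∈ U j,
      deleteVar i p ∉
        associatedPrimes (MvPolynomial (Fin n) K)
          ((MvPolynomial (Fin n) K) ⧸ (deleteVar i I) ^ s))
    (hass : p ∈ associatedPrimes (MvPolynomial (Fin n) K) ((MvPolynomial (Fin n) K) ⧸ I ^ s)) :
    b + 1 ≤ s := by
  by_contra! hsb
  obtain ⟨S, hIS⟩ := hI
  have hIs : I ^ s = monomialIdeal K (s • (fun T => ∑ k ∈ T, Finsupp.single k 1) '' S) := by
    rw [hIS, span_prod_X_image_eq_monomialIdeal, monomialIdeal_pow]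
  have hpE := hpA.trans (span_X_image_eq_monomialIdeal A)
  obtain ⟨hprime, f, hf⟩ := mem_associatedPrimes_quotient_iff.1 hass
  rw [hIs, hpE] at hf
  obtain ⟨u, hu⟩ := exists_monomial_colon_eq (hpE ▸ hprime) hf
  have hUu : ∀ j, ∀ i ∈ U j, u i ≠ 0 := by
    intro j i hi hui
    refine hdel j i hi (mem_associatedPrimes_quotient_iff.2 ⟨?_, monomial u 1, ?_⟩)
    · rw [hpA, deleteVar_span_X_image]
      exact isPrime_span_X_image _
    · rw [deleteVar_pow, hIs, hpE]
      exact deleteVar_colon_monomial hui hu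
  have hmem : monomial u 1 ∈ I ^ s := Fintype.card_fin s ▸
    monomial_mem_pow_of_pairwise_disjoint (T := U ∘ Fin.castLE (by omega))
      (fun j j' h => hUindep _ _ ((Fin.castLE_injective _).ne h)) (fun j => (hUgen _).1)
      fun j => hUu _
  rw [hIs, ← one_mul (monomial u 1), ← hu, ← hpE] at hmem
  exact hprime.ne_top ((Ideal.eq_top_iff_one _).2 hmem)

theorem stmt_2 {K : Type*} [Field K] {n : ℕ}
    (I : Ideal (MvPolynomial (Fin n) K))
    (hI : ∃ S : Set (Finset (Fin n)),
      I = Ideal.span ((fun T => ∏ i ∈ T, (X i : MvPolynomial (Fin n) K)) '' S))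
    (A : Set (Fin n)) (p : Ideal (MvPolynomial (Fin n) K))
    (hpA : p = Ideal.span (X '' A)) (hp : p.IsPrime)
    -- `{u_1, …, u_b}` is an independent set of minimal generators (`b = β₁(I)`):
    (b : ℕ) (U : Fin b → Finset (Fin n))
    (hUinj : Function.Injective U)
    (hUgen : ∀ j : Fin b, IsMinGen I (U j))
    (hUindep : ∀ j k : Fin b, j ≠ k → Disjoint (U j) (U k))
    -- … which is maximal: every independent set of minimal generators has at most `b` elements:
    (hUmax : ∀ Γ : Finset (Finset (Fin n)), (∀ T ∈ Γ, IsMinGen I T) →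
      (∀ T ∈ Γ, ∀ T' ∈ Γ, T ≠ T' → Disjoint T T') → Γ.card ≤ b)
    (s : ℕ) (hs : 1 ≤ s)
    (hdel : ∀ j : Fin b, ∀ i ∈ U j,
      deleteVar i p ∉
        associatedPrimes (MvPolynomial (Fin n) K)
          ((MvPolynomial (Fin n) K) ⧸ (deleteVar i I) ^ s))
    (hass : p ∈ associatedPrimes (MvPolynomial (Fin n) K) ((MvPolynomial (Fin n) K) ⧸ I ^ s)) :
    b + 1 ≤ s :=
  stmt_2_general I hI A p hpA b U hUgen hUindep s hdel hass
end

section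
/- Let K be a field, n ≥ 2 an integer, R = K[x_1,…,x_n], and let J(K_n) = ⋂_{1 ≤ i < j ≤ n} (x_i, x_j) be the cover ideal of the complete graph K_n. Then the maximal graded ideal (x_1,…,x_n) belongs to Ass(R/J(K_n)^t) for every integer t ≥ n−1. -/
/-!
The cover ideal `J` of `K_n` is generated by the monomials `∏_{j ≠ k} x_j`, the minimal vertex
covers, all of degree `n - 1`; hence `J^t ⊆ 𝔪^((n-1)t)` and a monomial `x^e` with
`e ≤ (t, …, t)` and `|e| = (n-1)t` lies in `J^t`, being `∏_k (∏_{j ≠ k} x_j)^(t - e_k)`.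
For `t ≥ n - 1` there is an exponent `a < (t, …, t)` of total degree `(n-1)t - 1`, e.g.
`x_1^(n-2) ∏_{j ≥ 2} x_j^(t-1)`. Then `u = x^a ∉ J^t` for degree reasons while every `x_i u`
is in `J^t`, so the maximal ideal `𝔪` is the annihilator of the class of `u` in `R / J^t`.
-/

open MvPolynomial

theorem Finsupp.card_sub_one_le_degree {σ : Type*} [Fintype σ] (d : σ →₀ ℕ)
    (hd : ∀ i j, d i = 0 → d j = 0 → i = j) : Fintype.card σ - 1 ≤ d.degree := by
  classical
  calc Fintype.card σ - 1 ≤ d.support.card := by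
        have hcompl : d.supportᶜ.card ≤ 1 := Finset.card_le_one.mpr fun i hi j hj =>
          hd i j (by simpa using hi) (by simpa using hj)
        rw [Finset.card_compl] at hcompl
        omega
    _ ≤ d.degree := by
        rw [Finsupp.degree_apply, Finset.card_eq_sum_ones]
        exact Finset.sum_le_sum fun i hi =>
          Nat.one_le_iff_ne_zero.mpr (Finsupp.mem_support_iff.mp hi)

theorem Finsupp.exists_forall_lt_and_degree_add_one_eq {σ : Type*} [Fintype σ] {t : ℕ}
    (hσ : 2 ≤ Fintype.card σ) (ht : Fintype.card σ - 1 ≤ t) :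
    ∃ a : σ →₀ ℕ, (∀ j, a j < t) ∧ a.degree + 1 = (Fintype.card σ - 1) * t := by
  classical
  obtain ⟨z⟩ : Nonempty σ := Fintype.card_pos_iff.mp (by omega)
  refine ⟨Finsupp.equivFunOnFinite.symm fun j => if j = z then Fintype.card σ - 2 else t - 1,
    fun j => ?_, ?_⟩
  · simp only [Finsupp.coe_equivFunOnFinite_symm]
    split <;> omega
  · simp only [Finsupp.degree_eq_sum, Finsupp.coe_equivFunOnFinite_symm]
    rw [← Finset.add_sum_erase _ _ (Finset.mem_univ z),
      Finset.sum_congr rfl fun j hj => if_neg (Finset.ne_of_mem_erase hj)]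
    simp only [if_pos, Finset.sum_const, smul_eq_mul,
      Finset.card_erase_of_mem (Finset.mem_univ z), Finset.card_univ]
    obtain ⟨m, hm⟩ : ∃ m, Fintype.card σ = m + 2 := ⟨_, (Nat.sub_add_cancel hσ).symm⟩
    obtain ⟨s, rfl⟩ : ∃ s, t = s + 1 := ⟨t - 1, by omega⟩
    rw [hm, show m + 2 - 2 = m by omega, show m + 2 - 1 = m + 1 by omega, Nat.add_sub_cancel]
    ring

theorem Ideal.span_mem_associatedPrimes_quotient {R : Type*} [CommRing R] {S : Set R}
    (hS : (Ideal.span S).IsMaximal) {I : Ideal R} {u : R} (hu : u ∉ I)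
    (hSu : ∀ s ∈ S, s * u ∈ I) : Ideal.span S ∈ associatedPrimes R (R ⧸ I) := by
  refine ⟨hS.isPrime, Ideal.Quotient.mk I u, ?_⟩
  have hle : Ideal.span S ≤ (⊥ : Submodule R (R ⧸ I)).colon {Ideal.Quotient.mk I u} := by
    refine Ideal.span_le.mpr fun s hs => ?_
    rw [SetLike.mem_coe, Submodule.mem_colon_singleton, Submodule.mem_bot, Algebra.smul_def,
      Ideal.Quotient.algebraMap_eq, ← map_mul, Ideal.Quotient.eq_zero_iff_mem]
    exact hSu s hs
  have hne : (⊥ : Submodule R (R ⧸ I)).colon {Ideal.Quotient.mk I u} ≠ ⊤ := by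
    rw [Ne, Ideal.eq_top_iff_one, Submodule.mem_colon_singleton, Submodule.mem_bot, one_smul,
      Ideal.Quotient.eq_zero_iff_mem]
    exact hu
  rw [← hS.eq_of_le hne hle, hS.isPrime.radical]

namespace MvPolynomial

theorem ker_constantCoeff {σ R : Type*} [CommSemiring R] :
    RingHom.ker (constantCoeff : MvPolynomial σ R →+* R) = idealOfVars σ R := by
  ext p
  rw [RingHom.mem_ker, ← pow_one (idealOfVars σ R), mem_pow_idealOfVars_iff',
    constantCoeff_eq]
  simp [Finsupp.degree_eq_zero_iff]

theorem idealOfVars_isMaximal (σ K : Type*) [Field K] : (idealOfVars σ K).IsMaximal := by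
  rw [← ker_constantCoeff]
  exact RingHom.ker_isMaximal_of_surjective _ fun a => ⟨C a, constantCoeff_C σ a⟩

section CoverIdeal

variable (σ R : Type*) [CommSemiring R]

noncomputable def completeGraphCoverIdeal [LinearOrder σ] : Ideal (MvPolynomial σ R) :=
  ⨅ (i : σ) (j : σ) (_ : i < j), Ideal.span {X i, X j}

theorem completeGraphCoverIdeal_le_pow_idealOfVars [Fintype σ] [LinearOrder σ] :
    completeGraphCoverIdeal σ R ≤ idealOfVars σ R ^ (Fintype.card σ - 1) := by
  intro f hf
  rw [mem_pow_idealOfVars_iff]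
  intro d hd
  have hcover : ∀ i j, i < j → d i = 0 → d j = 0 → False := fun i j hij hi hj => by
    have hfij := Ideal.mem_iInf.mp (Ideal.mem_iInf.mp (Ideal.mem_iInf.mp hf i) j) hij
    rw [← Set.image_pair, mem_ideal_span_X_image] at hfij
    obtain ⟨k, hk, hdk⟩ := hfij d hd
    rcases hk with rfl | rfl <;> contradiction
  refine d.card_sub_one_le_degree fun i j hi hj => ?_
  rcases lt_trichotomy i j with h | h | h
  · exact (hcover i j h hi hj).elim
  · exact h
  · exact (hcover j i h hj hi).elim

variable {σ}

/-- The exponent of `∏_{j ≠ k} X j`, the minimal vertex cover `σ \ {k}` of the complete graph. -/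
noncomputable def coverExp [Finite σ] [DecidableEq σ] (k : σ) : σ →₀ ℕ :=
  Finsupp.equivFunOnFinite.symm fun j => if j = k then 0 else 1

theorem coverExp_apply [Finite σ] [DecidableEq σ] (k j : σ) :
    coverExp k j = if j = k then 0 else 1 := by
  simp [coverExp]

theorem sum_smul_coverExp_apply_add [Fintype σ] [DecidableEq σ] (c : σ → ℕ) (j : σ) :
    (∑ k, c k • coverExp k) j + c j = ∑ k, c k := by
  rw [Finsupp.finsetSum_apply, ← Finset.sum_erase_add _ _ (Finset.mem_univ j),
    ← Finset.sum_erase_add (s := Finset.univ) c (Finset.mem_univ j), Finsupp.smul_apply,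
    coverExp_apply, if_pos rfl, smul_zero, add_zero]
  congr 1
  refine Finset.sum_congr rfl fun k hk => ?_
  rw [Finsupp.smul_apply, coverExp_apply, if_neg (Finset.ne_of_mem_erase hk).symm, smul_eq_mul,
    mul_one]

theorem monomial_coverExp_mem_completeGraphCoverIdeal [Finite σ] [LinearOrder σ] (k : σ) :
    monomial (coverExp k) (1 : R) ∈ completeGraphCoverIdeal σ R := by
  simp only [completeGraphCoverIdeal, Ideal.mem_iInf]
  intro i j hij
  rcases eq_or_ne i k with rfl | hik
  · exact Ideal.mem_of_dvd _
      ((X_dvd_monomial (i := j)).mpr (Or.inr (by simp [coverExp_apply, hij.ne'])))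
      (Ideal.subset_span (by simp))
  · exact Ideal.mem_of_dvd _
      ((X_dvd_monomial (i := i)).mpr (Or.inr (by simp [coverExp_apply, hik])))
      (Ideal.subset_span (by simp))

theorem monomial_mem_pow_completeGraphCoverIdeal [Fintype σ] [Nonempty σ] [LinearOrder σ]
    {t : ℕ} {e : σ →₀ ℕ} (he : ∀ j, e j ≤ t) (hdeg : e.degree = (Fintype.card σ - 1) * t) :
    monomial e (1 : R) ∈ completeGraphCoverIdeal σ R ^ t := by
  set c : σ → ℕ := fun k => t - e k
  have hsum : ∑ k, c k = t := by
    have h1 : ∑ k, c k + e.degree = Fintype.card σ * t := by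
      rw [Finsupp.degree_eq_sum, ← Finset.sum_add_distrib,
        Finset.sum_congr rfl fun k _ => Nat.sub_add_cancel (he k)]
      simp
    have := Nat.sub_one_mul (Fintype.card σ) t
    have := Nat.le_mul_of_pos_left t (Fintype.card_pos (α := σ))
    omega
  have he_eq : e = ∑ k, c k • coverExp k := by
    ext j
    have hj := sum_smul_coverExp_apply_add c j
    have hcj : c j = t - e j := rfl
    rw [hsum] at hj
    have := he j
    omega
  rw [he_eq, monomial_sum_one, ← hsum, ← Finset.prod_pow_eq_pow_sum]
  refine Ideal.prod_mem_prod fun k _ => ?_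
  rw [← one_pow (c k), ← monomial_pow]
  exact Ideal.pow_mem_pow (monomial_coverExp_mem_completeGraphCoverIdeal R k) _

theorem idealOfVars_mem_associatedPrimes_quotient_pow_completeGraphCoverIdeal (K : Type*)
    [Field K] [Fintype σ] [LinearOrder σ] {t : ℕ} (hσ : 2 ≤ Fintype.card σ)
    (ht : Fintype.card σ - 1 ≤ t) :
    idealOfVars σ K ∈
      associatedPrimes (MvPolynomial σ K)
        (MvPolynomial σ K ⧸ completeGraphCoverIdeal σ K ^ t) := by
  have : Nonempty σ := Fintype.card_pos_iff.mp (by omega)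
  obtain ⟨a, ha, hdeg⟩ := Finsupp.exists_forall_lt_and_degree_add_one_eq hσ ht
  have hpow :
      completeGraphCoverIdeal σ K ^ t ≤ idealOfVars σ K ^ ((Fintype.card σ - 1) * t) := by
    rw [pow_mul]
    exact Ideal.pow_right_mono (completeGraphCoverIdeal_le_pow_idealOfVars σ K) t
  refine Ideal.span_mem_associatedPrimes_quotient (idealOfVars_isMaximal σ K) (u := monomial a 1)
    (fun hmem => ?_) ?_
  · have := (monomial_mem_pow_idealOfVars_iff _ a one_ne_zero).mp (hpow hmem)
    omega
  · rintro _ ⟨i, rfl⟩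
    rw [X, monomial_mul, one_mul]
    refine monomial_mem_pow_completeGraphCoverIdeal K (fun j => ?_) ?_
    · have := ha j
      rw [Finsupp.add_apply, Finsupp.single_apply]
      split <;> omega
    · rw [map_add, Finsupp.degree_single]
      omega

end CoverIdeal

end MvPolynomial

theorem stmt_10 {K : Type*} [Field K] (n : ℕ) (hn : 2 ≤ n)
    (t : ℕ) (ht : n - 1 ≤ t) :
    Ideal.span (Set.range (X : Fin n → MvPolynomial (Fin n) K)) ∈
      associatedPrimes (MvPolynomial (Fin n) K)
        ((MvPolynomial (Fin n) K) ⧸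
          (⨅ (i : Fin n) (j : Fin n) (_ : i < j),
            Ideal.span {(X i : MvPolynomial (Fin n) K), X j}) ^ t) :=
  idealOfVars_mem_associatedPrimes_quotient_pow_completeGraphCoverIdeal K
    (by simpa using hn) (by simpa using ht)
end

section
/- Let K be a field, n ≥ 3 an integer, R = K[x_1,…,x_n], and let I(K_n) = (x_i x_j : 1 ≤ i < j ≤ n) be the edge ideal of the complete graph K_n. Then the maximal graded ideal (x_1,…,x_n) belongs to Ass(R/I(K_n)^t) for every integer t ≥ 2. -/
open MvPolynomial

/-
Let `a, b, c` be three distinct vertices and `u = x_a^(t-1) x_b^(t-1) x_c`. Every variable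
multiplies `u` into `I^t`: `x_a u = (x_a x_b)^(t-1) (x_a x_c)`, `x_b u = (x_a x_b)^(t-1) (x_b x_c)`,
and `x_k u = (x_a x_b)^(t-2) (x_a x_c) (x_b x_k)` otherwise. But `u ∉ I^t`, since `I^t` consists
of polynomials all of whose monomials have degree at least `2t`, while `u` has degree `2t - 1`.
Hence the annihilator of `u` in `R/I^t` is the maximal ideal `(x_1, …, x_n)`.
-/

theorem Ideal.IsMaximal.mem_associatedPrimes_quotient {R : Type*} [CommRing R]
    {m J : Ideal R} (hm : m.IsMaximal) {u : R} (hu : u ∉ J) (hmu : m ≤ J.colon {u}) :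
    m ∈ associatedPrimes R (R ⧸ J) := by
  have hcolon : (⊥ : Submodule R (R ⧸ J)).colon {Ideal.Quotient.mk J u} = J.colon {u} := by
    ext r
    rw [Submodule.mem_colon_singleton, Submodule.mem_bot, Submodule.mem_colon_singleton,
      Algebra.smul_def, Ideal.Quotient.algebraMap_eq, ← map_mul, Ideal.Quotient.eq_zero_iff_mem,
      smul_eq_mul]
  have hne_top : J.colon {u} ≠ ⊤ := by
    rw [Ne, Ideal.eq_top_iff_one, Submodule.mem_colon_singleton, one_smul]
    exact hu
  refine ⟨hm.isPrime, Ideal.Quotient.mk J u, ?_⟩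
  rw [hcolon, ← hm.eq_of_le hne_top hmu, hm.isPrime.radical]

namespace MvPolynomial

variable {σ R : Type*} [CommRing R]

theorem idealOfVars_eq_ker_constantCoeff :
    idealOfVars σ R = RingHom.ker (constantCoeff : MvPolynomial σ R →+* R) := by
  ext p
  rw [← pow_one (idealOfVars σ R), mem_pow_idealOfVars_iff', RingHom.mem_ker,
    constantCoeff_eq]
  simp [Finsupp.degree_eq_zero_iff]

theorem isMaximal_idealOfVars (K : Type*) [Field K] : (idealOfVars σ K).IsMaximal := by
  rw [idealOfVars_eq_ker_constantCoeff]
  exact RingHom.ker_isMaximal_of_surjective _ fun r => ⟨C r, constantCoeff_C σ r⟩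

variable (σ R) [LinearOrder σ]

noncomputable def completeGraphEdgeIdeal : Ideal (MvPolynomial σ R) :=
  Ideal.span {f | ∃ i j : σ, i < j ∧ f = X i * X j}

variable {σ R}

theorem X_mul_X_mem_completeGraphEdgeIdeal {i j : σ} (hij : i ≠ j) :
    X i * X j ∈ completeGraphEdgeIdeal σ R := by
  rcases hij.lt_or_gt with h | h
  · exact Ideal.subset_span ⟨i, j, h, rfl⟩
  · rw [mul_comm]
    exact Ideal.subset_span ⟨j, i, h, rfl⟩

theorem completeGraphEdgeIdeal_le_idealOfVars_sq :
    completeGraphEdgeIdeal σ R ≤ idealOfVars σ R ^ 2 := by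
  rw [completeGraphEdgeIdeal, Ideal.span_le]
  rintro _ ⟨i, j, -, rfl⟩
  rw [pow_two]
  exact Ideal.mul_mem_mul (Ideal.subset_span ⟨i, rfl⟩) (Ideal.subset_span ⟨j, rfl⟩)

theorem X_mul_mem_completeGraphEdgeIdeal_pow {a b c : σ} (hab : a ≠ b) (hac : a ≠ c)
    (hbc : b ≠ c) (t : ℕ) (k : σ) :
    X k * (X a ^ (t + 1) * X b ^ (t + 1) * X c) ∈ completeGraphEdgeIdeal σ R ^ (t + 2) := by
  have hedge {i j : σ} (hij : i ≠ j) := X_mul_X_mem_completeGraphEdgeIdeal (R := R) hij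
  by_cases hka : k = a
  · subst hka
    rw [show X k * (X k ^ (t + 1) * X b ^ (t + 1) * X c) =
      (X k * X b) ^ (t + 1) * (X k * X c) by ring, pow_succ]
    exact Ideal.mul_mem_mul (Ideal.pow_mem_pow (hedge hab) _) (hedge hac)
  by_cases hkb : k = b
  · subst hkb
    rw [show X k * (X a ^ (t + 1) * X k ^ (t + 1) * X c) =
      (X a * X k) ^ (t + 1) * (X k * X c) by ring, pow_succ]
    exact Ideal.mul_mem_mul (Ideal.pow_mem_pow (hedge hab) _) (hedge hbc)
  rw [show X k * (X a ^ (t + 1) * X b ^ (t + 1) * X c) =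
    (X a * X b) ^ t * (X a * X c) * (X b * X k) by ring, pow_succ, pow_succ]
  exact Ideal.mul_mem_mul (Ideal.mul_mem_mul (Ideal.pow_mem_pow (hedge hab) _) (hedge hac))
    (hedge (Ne.symm hkb))

theorem X_pow_mul_X_pow_mul_X_notMem_completeGraphEdgeIdeal_pow [Nontrivial R] (a b c : σ)
    (t : ℕ) :
    X a ^ (t + 1) * X b ^ (t + 1) * X c ∉ completeGraphEdgeIdeal σ R ^ (t + 2) := by
  intro hmem
  have hle : completeGraphEdgeIdeal σ R ^ (t + 2) ≤ idealOfVars σ R ^ (2 * (t + 2)) := by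
    rw [pow_mul]
    exact Ideal.pow_right_mono completeGraphEdgeIdeal_le_idealOfVars_sq _
  have := hle hmem
  rw [X_pow_eq_monomial, X_pow_eq_monomial, X, monomial_mul, monomial_mul, one_mul, one_mul,
    monomial_mem_pow_idealOfVars_iff _ _ one_ne_zero] at this
  simp only [map_add, Finsupp.degree_single] at this
  omega

end MvPolynomial

theorem stmt_11 {K : Type*} [Field K] (n : ℕ) (hn : 3 ≤ n)
    (t : ℕ) (ht : 2 ≤ t) :
    Ideal.span (Set.range (X : Fin n → MvPolynomial (Fin n) K)) ∈
      associatedPrimes (MvPolynomial (Fin n) K)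
        ((MvPolynomial (Fin n) K) ⧸
          (Ideal.span {f : MvPolynomial (Fin n) K |
            ∃ i j : Fin n, i < j ∧ f = X i * X j}) ^ t) := by
  obtain ⟨s, rfl⟩ : ∃ s, t = s + 2 := ⟨t - 2, by omega⟩
  let a : Fin n := ⟨0, by omega⟩
  let b : Fin n := ⟨1, by omega⟩
  let c : Fin n := ⟨2, by omega⟩
  have hab : a ≠ b := by simp [a, b, Fin.ext_iff]
  have hac : a ≠ c := by simp [a, c, Fin.ext_iff]
  have hbc : b ≠ c := by simp [b, c, Fin.ext_iff]
  refine (isMaximal_idealOfVars K).mem_associatedPrimes_quotient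
    (X_pow_mul_X_pow_mul_X_notMem_completeGraphEdgeIdeal_pow a b c s) ?_
  rw [Ideal.span_le]
  rintro _ ⟨k, rfl⟩
  exact Submodule.mem_colon_singleton.2 (X_mul_mem_completeGraphEdgeIdeal_pow hab hac hbc s k)
end
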